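/- arXiv:2211.14808 — 2 statements merged into one kernel-verified Lean document; each statement's English description precedes it below -/
import Mathlib

section
/- Suppose V ∈ L^∞_loc(ℝ²) is nonnegative with liminf_{|x|→∞} V(x)/|x|² > 0, let Ω* be defined as the supremum of Ω > 0 such that V(x) - (Ω²/4)|x|² → ∞ as |x| → ∞, and fix 0 < Ω < Ω*. Then there exist constants c, C > 0 such that for every u ∈ H¹(ℝ², ℂ) with ∫(V+1)|u|² < ∞: c‖u‖²_H ≤ ∫_{ℝ²} |(∇ - i(Ω/2)x^⊥)u|² dx + ∫_{ℝ²} (|V_Ω(x)| + 1)|u|² dx ≤ C‖u‖²_H, where ‖u‖²_H = ∫ |∇u|² + (V+1)|u|² dx and V_Ω(x) = V(x) - (Ω²/4)|x|². -/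
/-
The magnetic and the ordinary gradient differ by `i(Ω/2)x^⊥u`, so their squares differ pointwise
by at most a multiple of `|x|²|u|²`; likewise `|V|` and `|V_Ω|` differ by `(Ω²/4)|x|²`. Picking
`Ω < ω < Ω*`, both `V` and `V_Ω = V_ω + (ω² - Ω²)|x|²/4` dominate a positive multiple of `|x|²`
outside a compact set, so `|x|²` is bounded by a multiple of `V + 1` and of `|V_Ω| + 1`. Hence the
two energy densities are pointwise comparable, and the norms are equivalent after integration.
-/

open MeasureTheory Filter

noncomputable def pd1C (f : ℝ × ℝ → ℂ) (x : ℝ × ℝ) : ℂ := fderiv ℝ f x (1, 0)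
noncomputable def pd2C (f : ℝ × ℝ → ℂ) (x : ℝ × ℝ) : ℂ := fderiv ℝ f x (0, 1)

/-- Squared Euclidean norm of the gradient of a complex-valued function. -/
noncomputable def gradsqC (f : ℝ × ℝ → ℂ) (x : ℝ × ℝ) : ℝ :=
  ‖pd1C f x‖ ^ 2 + ‖pd2C f x‖ ^ 2

/-- Squared norm of the magnetic gradient `(∇ - i(Ω/2)x^⊥)u`, where `x^⊥ = (-x₂, x₁)`. -/
noncomputable def maggradsq (Ω : ℝ) (u : ℝ × ℝ → ℂ) (x : ℝ × ℝ) : ℝ :=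
  ‖pd1C u x - Complex.I * Complex.ofReal (Ω / 2 * (-x.2)) * u x‖ ^ 2 +
    ‖pd2C u x - Complex.I * Complex.ofReal (Ω / 2 * x.1) * u x‖ ^ 2

lemma norm_sub_sq_le {E : Type*} [SeminormedAddCommGroup E] (a b : E) :
    ‖a - b‖ ^ 2 ≤ 2 * ‖a‖ ^ 2 + 2 * ‖b‖ ^ 2 := by
  nlinarith [norm_sub_le a b, norm_nonneg (a - b), sq_nonneg (‖a‖ - ‖b‖)]

lemma norm_I_mul_ofReal_mul_sq (r : ℝ) (z : ℂ) :
    ‖Complex.I * r * z‖ ^ 2 = r ^ 2 * ‖z‖ ^ 2 := by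
  rw [norm_mul, norm_mul, Complex.norm_I, one_mul, Complex.norm_real, Real.norm_eq_abs,
    mul_pow, sq_abs]

lemma maggradsq_le (Ω : ℝ) (u : ℝ × ℝ → ℂ) (x : ℝ × ℝ) :
    maggradsq Ω u x ≤
      2 * gradsqC u x + 2 * (Ω ^ 2 / 4) * (x.1 ^ 2 + x.2 ^ 2) * ‖u x‖ ^ 2 := by
  have h₁ := norm_sub_sq_le (pd1C u x) (Complex.I * ↑(Ω / 2 * -x.2) * u x)
  have h₂ := norm_sub_sq_le (pd2C u x) (Complex.I * ↑(Ω / 2 * x.1) * u x)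
  rw [norm_I_mul_ofReal_mul_sq] at h₁ h₂
  simp only [maggradsq, gradsqC]
  linarith

lemma gradsqC_le (Ω : ℝ) (u : ℝ × ℝ → ℂ) (x : ℝ × ℝ) :
    gradsqC u x ≤
      2 * maggradsq Ω u x + 2 * (Ω ^ 2 / 4) * (x.1 ^ 2 + x.2 ^ 2) * ‖u x‖ ^ 2 := by
  have h₁ := norm_sub_sq_le (pd1C u x - Complex.I * ↑(Ω / 2 * -x.2) * u x)
    (-(Complex.I * ↑(Ω / 2 * -x.2) * u x))
  have h₂ := norm_sub_sq_le (pd2C u x - Complex.I * ↑(Ω / 2 * x.1) * u x)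
    (-(Complex.I * ↑(Ω / 2 * x.1) * u x))
  rw [sub_neg_eq_add, sub_add_cancel, norm_neg, norm_I_mul_ofReal_mul_sq] at h₁ h₂
  simp only [maggradsq, gradsqC]
  linarith

lemma continuous_maggradsq (Ω : ℝ) {u : ℝ × ℝ → ℂ} (hu : ContDiff ℝ 1 u) :
    Continuous (maggradsq Ω u) := by
  have hdu : Continuous (fderiv ℝ u) := hu.continuous_fderiv one_ne_zero
  have : Continuous u := hu.continuous
  unfold maggradsq pd1C pd2C
  fun_prop

/-- Pointwise comparison of energy densities: `e, e'` stand for the two squared gradients, `f, g`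
for the two potentials, `r` for `|x|²` and `s` for `|u|²`. -/
lemma add_abs_add_one_mul_le {e e' f g k r s A : ℝ} (hk : 0 ≤ k) (hA : 0 ≤ A) (hs : 0 ≤ s)
    (he' : 0 ≤ e') (he : e ≤ 2 * e' + 2 * k * r * s) (hfg : |f - g| ≤ k * r)
    (hr : r ≤ A * (|g| + 1)) :
    e + (|f| + 1) * s ≤ (2 + 3 * k * A) * (e' + (|g| + 1) * s) := by
  have hf : |f| ≤ |g| + k * r := by linarith [abs_sub_abs_le_abs_sub f g]
  have hkr : k * r * s ≤ k * (A * (|g| + 1)) * s :=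
    mul_le_mul_of_nonneg_right (mul_le_mul_of_nonneg_left hr hk) hs
  nlinarith [abs_nonneg g, mul_nonneg hk hA]

lemma exists_le_mul_abs_add_one_of_eventually_le {X : Type*} [TopologicalSpace X]
    {q f : X → ℝ} {d : ℝ} (hq : Continuous q) (hd : 0 < d)
    (h : ∀ᶠ x in cocompact X, d * q x ≤ f x) :
    ∃ A, 0 ≤ A ∧ ∀ x, q x ≤ A * (|f x| + 1) := by
  obtain ⟨K, hK, hKf⟩ := mem_cocompact.mp h
  obtain ⟨M, hM⟩ := hK.bddAbove_image hq.continuousOn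
  have hA : 0 ≤ max d⁻¹ M := (inv_pos.2 hd).le.trans (le_max_left _ _)
  refine ⟨max d⁻¹ M, hA, fun x => ?_⟩
  have hAf : 0 ≤ max d⁻¹ M * |f x| := mul_nonneg hA (abs_nonneg _)
  by_cases hx : x ∈ K
  · have : q x ≤ M := hM ⟨x, hx, rfl⟩
    nlinarith [le_max_right d⁻¹ M]
  · have hqf : q x ≤ d⁻¹ * |f x| := by
      rw [le_inv_mul_iff₀ hd]
      exact (hKf hx).trans (le_abs_self _)
    nlinarith [mul_le_mul_of_nonneg_right (le_max_left d⁻¹ M) (abs_nonneg (f x))]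

namespace MeasureTheory

variable {α : Type*} [MeasurableSpace α] {μ : Measure α} {e w g : α → ℝ}

lemma Integrable.of_add_le_mul (hg : Integrable g μ) (he : AEStronglyMeasurable e μ)
    (he0 : ∀ x, 0 ≤ e x) (hw0 : ∀ x, 0 ≤ w x) {C : ℝ} (h : ∀ x, e x + w x ≤ C * g x) :
    Integrable e μ :=
  (hg.const_mul C).mono' he <| ae_of_all _ fun x => by
    rw [Real.norm_eq_abs, abs_of_nonneg (he0 x)]
    linarith [hw0 x, h x]

lemma integral_add_le_mul_integral_add {e' w' : α → ℝ} (he : Integrable e μ)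
    (hw : Integrable w μ) (he' : Integrable e' μ) (hw' : Integrable w' μ) {C : ℝ}
    (h : ∀ x, e x + w x ≤ C * (e' x + w' x)) :
    ∫ x, e x ∂μ + ∫ x, w x ∂μ ≤ C * (∫ x, e' x ∂μ + ∫ x, w' x ∂μ) := by
  rw [← integral_add he hw, ← integral_add he' hw', ← integral_const_mul]
  exact integral_mono (he.add hw) ((he'.add hw').const_mul C) h

lemma AEStronglyMeasurable.abs_sub_add_one_mul {f p s : α → ℝ}
    (hf : AEStronglyMeasurable (fun x => (f x + 1) * s x) μ)
    (hp : AEStronglyMeasurable (fun x => (p x + 1) * s x) μ)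
    (hs : AEStronglyMeasurable s μ) (hs0 : ∀ x, 0 ≤ s x) :
    AEStronglyMeasurable (fun x => (|f x - p x| + 1) * s x) μ := by
  refine ((hf.sub hp).norm.add hs).congr (ae_of_all _ fun x => ?_)
  simp only [Pi.sub_apply, Pi.add_apply, Real.norm_eq_abs]
  rw [← sub_mul, add_sub_add_right_eq_sub, abs_mul, abs_of_nonneg (hs0 x), add_one_mul]

end MeasureTheory

theorem magnetic_norm_equivalence_general (V : ℝ × ℝ → ℝ) (Ω : ℝ)
    (hV0 : ∀ x, 0 ≤ V x)
    (hΩpos : 0 < Ω)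
    (hΩlt : Ω < sSup {ω : ℝ | 0 < ω ∧
        Tendsto (fun x : ℝ × ℝ => V x - ω ^ 2 / 4 * (x.1 ^ 2 + x.2 ^ 2))
          (cocompact (ℝ × ℝ)) atTop}) :
    ∃ c > 0, ∃ C > 0, ∀ u : ℝ × ℝ → ℂ, ContDiff ℝ 1 u →
      Integrable (fun x => (V x + 1) * ‖u x‖ ^ 2) →
      Integrable (fun x => gradsqC u x) →
      c * ((∫ x, gradsqC u x) + ∫ x, (V x + 1) * ‖u x‖ ^ 2) ≤
          (∫ x, maggradsq Ω u x) +
            (∫ x, (|V x - Ω ^ 2 / 4 * (x.1 ^ 2 + x.2 ^ 2)| + 1) * ‖u x‖ ^ 2) ∧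
        (∫ x, maggradsq Ω u x) +
            (∫ x, (|V x - Ω ^ 2 / 4 * (x.1 ^ 2 + x.2 ^ 2)| + 1) * ‖u x‖ ^ 2) ≤
          C * ((∫ x, gradsqC u x) + ∫ x, (V x + 1) * ‖u x‖ ^ 2) := by
  have hne : {ω : ℝ | 0 < ω ∧
      Tendsto (fun x : ℝ × ℝ => V x - ω ^ 2 / 4 * (x.1 ^ 2 + x.2 ^ 2))
        (cocompact (ℝ × ℝ)) atTop}.Nonempty :=
    Set.nonempty_iff_ne_empty.2 fun h => by rw [h, Real.sSup_empty] at hΩlt; linarith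
  obtain ⟨ω, ⟨-, hω⟩, hΩω⟩ := exists_lt_of_lt_csSup hne hΩlt
  have hq : Continuous fun x : ℝ × ℝ => x.1 ^ 2 + x.2 ^ 2 := by fun_prop
  have hVω := hω.eventually_ge_atTop 0
  obtain ⟨A, hA0, hA⟩ := exists_le_mul_abs_add_one_of_eventually_le (f := V) hq
    (by nlinarith : 0 < ω ^ 2 / 4) (hVω.mono fun x hx => by linarith)
  obtain ⟨B, hB0, hB⟩ := exists_le_mul_abs_add_one_of_eventually_le
    (f := fun x => V x - Ω ^ 2 / 4 * (x.1 ^ 2 + x.2 ^ 2)) hq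
    (by nlinarith : 0 < (ω ^ 2 - Ω ^ 2) / 4)
    (hVω.mono fun x hx => by nlinarith [sq_nonneg x.1, sq_nonneg x.2])
  refine ⟨(2 + 3 * (Ω ^ 2 / 4) * B)⁻¹, by positivity, 2 + 3 * (Ω ^ 2 / 4) * A, by positivity,
    fun u hu hW hG => ?_⟩
  have hkr (x : ℝ × ℝ) : 0 ≤ Ω ^ 2 / 4 * (x.1 ^ 2 + x.2 ^ 2) := by positivity
  have upper (x : ℝ × ℝ) : maggradsq Ω u x +
      (|V x - Ω ^ 2 / 4 * (x.1 ^ 2 + x.2 ^ 2)| + 1) * ‖u x‖ ^ 2 ≤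
      (2 + 3 * (Ω ^ 2 / 4) * A) * (gradsqC u x + (V x + 1) * ‖u x‖ ^ 2) := by
    simpa only [abs_of_nonneg (hV0 x)] using add_abs_add_one_mul_le (g := V x) (by positivity) hA0
      (by positivity) (by unfold gradsqC; positivity) (maggradsq_le Ω u x)
      (by rw [sub_sub_cancel_left, abs_neg, abs_of_nonneg (hkr x)]) (hA x)
  have lower (x : ℝ × ℝ) : gradsqC u x + (V x + 1) * ‖u x‖ ^ 2 ≤
      (2 + 3 * (Ω ^ 2 / 4) * B) * (maggradsq Ω u x +
        (|V x - Ω ^ 2 / 4 * (x.1 ^ 2 + x.2 ^ 2)| + 1) * ‖u x‖ ^ 2) := by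
    simpa only [abs_of_nonneg (hV0 x)] using add_abs_add_one_mul_le (f := V x) (by positivity) hB0
      (by positivity) (by unfold maggradsq; positivity) (gradsqC_le Ω u x)
      (by rw [sub_sub_cancel, abs_of_nonneg (hkr x)]) (hB x)
  have hM : Integrable (maggradsq Ω u) :=
    (hG.add hW).of_add_le_mul (continuous_maggradsq Ω hu).aestronglyMeasurable
      (fun x => by unfold maggradsq; positivity) (fun x => by positivity) upper
  have hu₀ : Continuous u := hu.continuous
  have hW' : Integrable fun x => (|V x - Ω ^ 2 / 4 * (x.1 ^ 2 + x.2 ^ 2)| + 1) * ‖u x‖ ^ 2 :=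
    (hG.add hW).of_add_le_mul
      (hW.aestronglyMeasurable.abs_sub_add_one_mul (by fun_prop) (by fun_prop)
        fun x => by positivity)
      (fun x => by positivity) (fun x => by unfold maggradsq; positivity)
      fun x => (add_comm _ _).trans_le (upper x)
  exact ⟨(inv_mul_le_iff₀ (by positivity)).2
      (integral_add_le_mul_integral_add hG hW hM hW' lower),
    integral_add_le_mul_integral_add hM hW' hG hW upper⟩

/-- equivalence of the magnetic weighted norm and the ordinary
weighted Sobolev norm, for `0 < Ω < Ω*`. -/
theorem magnetic_norm_equivalence (V : ℝ × ℝ → ℝ) (Ω : ℝ)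
    (hV0 : ∀ x, 0 ≤ V x)
    (hVloc : ∀ R : ℝ, ∃ M : ℝ, ∀ x : ℝ × ℝ, ‖x‖ ≤ R → V x ≤ M)
    (hVinf : ∃ c : ℝ, 0 < c ∧
      ∀ᶠ x : ℝ × ℝ in cocompact (ℝ × ℝ), c * (x.1 ^ 2 + x.2 ^ 2) ≤ V x)
    (hΩpos : 0 < Ω)
    (hΩlt : Ω < sSup {ω : ℝ | 0 < ω ∧
        Tendsto (fun x : ℝ × ℝ => V x - ω ^ 2 / 4 * (x.1 ^ 2 + x.2 ^ 2))
          (cocompact (ℝ × ℝ)) atTop}) :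
    ∃ c > 0, ∃ C > 0, ∀ u : ℝ × ℝ → ℂ, ContDiff ℝ 1 u →
      Integrable (fun x => (V x + 1) * ‖u x‖ ^ 2) →
      Integrable (fun x => gradsqC u x) →
      c * ((∫ x, gradsqC u x) + ∫ x, (V x + 1) * ‖u x‖ ^ 2) ≤
          (∫ x, maggradsq Ω u x) +
            (∫ x, (|V x - Ω ^ 2 / 4 * (x.1 ^ 2 + x.2 ^ 2)| + 1) * ‖u x‖ ^ 2) ∧
        (∫ x, maggradsq Ω u x) +
            (∫ x, (|V x - Ω ^ 2 / 4 * (x.1 ^ 2 + x.2 ^ 2)| + 1) * ‖u x‖ ^ 2) ≤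
          C * ((∫ x, gradsqC u x) + ∫ x, (V x + 1) * ‖u x‖ ^ 2) :=
  magnetic_norm_equivalence_general V Ω hV0 hΩpos hΩlt
end

section
/- Let max{a₁,a₂} < β < β* with 0 < a₁, a₂ < a*, and ρ_{jβ} = √(a*(β-a_m)/(β²-a₁a₂)) (j ≠ m, j,m ∈ {1,2}). Then ρ_{1β} → √γ₁ and ρ_{2β} → √γ₂ as β → β*, where γ₁ = √(a*-a₂)/(√(a*-a₁)+√(a*-a₂)) and γ₂ = √(a*-a₁)/(√(a*-a₁)+√(a*-a₂)). -/
open Filter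

lemma rho_aux (a₁ a₂ astar : ℝ)
    (h₁ : 0 < a₁) (h₁' : a₁ < astar) (h₂ : 0 < a₂) (h₂' : a₂ < astar) :
    Tendsto (fun β : ℝ => Real.sqrt (astar * (β - a₂) / (β ^ 2 - a₁ * a₂)))
        (nhdsWithin (astar + Real.sqrt ((astar - a₁) * (astar - a₂)))
          (Set.Iio (astar + Real.sqrt ((astar - a₁) * (astar - a₂)))))
        (nhds (Real.sqrt (Real.sqrt (astar - a₂) /
          (Real.sqrt (astar - a₁) + Real.sqrt (astar - a₂))))) := by
  set p := Real.sqrt (astar - a₁) with hp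
  set q := Real.sqrt (astar - a₂) with hq
  have hpp : 0 < p := Real.sqrt_pos.2 (by linarith)
  have hqq : 0 < q := Real.sqrt_pos.2 (by linarith)
  have hp2 : p ^ 2 = astar - a₁ := Real.sq_sqrt (by linarith)
  have hq2 : q ^ 2 = astar - a₂ := Real.sq_sqrt (by linarith)
  have hs : Real.sqrt ((astar - a₁) * (astar - a₂)) = p * q := by
    rw [Real.sqrt_mul (by linarith)]
  set βstar := astar + Real.sqrt ((astar - a₁) * (astar - a₂)) with hβ
  have hastar : 0 < astar := by linarith
  have hβval : βstar = astar + p * q := by rw [hβ, hs]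
  have hden : βstar ^ 2 - a₁ * a₂ = astar * (p + q) ^ 2 := by
    have ha1 : a₁ = astar - p ^ 2 := by linarith
    have ha2 : a₂ = astar - q ^ 2 := by linarith
    rw [hβval, ha1, ha2]; ring
  have hdenne : βstar ^ 2 - a₁ * a₂ ≠ 0 := by
    rw [hden]; positivity
  have hval : astar * (βstar - a₂) / (βstar ^ 2 - a₁ * a₂) = q / (p + q) := by
    have ha2 : a₂ = astar - q ^ 2 := by linarith
    rw [hden, hβval, ha2]
    field_simp
    ring
  have hc : ContinuousAt (fun β : ℝ =>
      Real.sqrt (astar * (β - a₂) / (β ^ 2 - a₁ * a₂))) βstar := by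
    apply Real.continuous_sqrt.continuousAt.comp
    exact ContinuousAt.div (by fun_prop) (by fun_prop) hdenne
  have := hc.continuousWithinAt (s := Set.Iio βstar)
  have h2 := this.tendsto
  simpa [hval] using h2

/-- as `β ↗ β*`, the coefficients
`ρ₁β = √(a*(β-a₂)/(β²-a₁a₂))` and `ρ₂β = √(a*(β-a₁)/(β²-a₁a₂))` converge to
`√γ₁` and `√γ₂` respectively, where `γ₁ = √(a*-a₂)/(√(a*-a₁)+√(a*-a₂))` and
`γ₂ = √(a*-a₁)/(√(a*-a₁)+√(a*-a₂))`. -/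
theorem rho_limits (a₁ a₂ astar : ℝ)
    (h₁ : 0 < a₁) (h₁' : a₁ < astar) (h₂ : 0 < a₂) (h₂' : a₂ < astar) :
    let βstar : ℝ := astar + Real.sqrt ((astar - a₁) * (astar - a₂))
    let γ₁ : ℝ := Real.sqrt (astar - a₂) /
      (Real.sqrt (astar - a₁) + Real.sqrt (astar - a₂))
    let γ₂ : ℝ := Real.sqrt (astar - a₁) /
      (Real.sqrt (astar - a₁) + Real.sqrt (astar - a₂))
    Tendsto (fun β : ℝ => Real.sqrt (astar * (β - a₂) / (β ^ 2 - a₁ * a₂)))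
        (nhdsWithin βstar (Set.Iio βstar)) (nhds (Real.sqrt γ₁)) ∧
      Tendsto (fun β : ℝ => Real.sqrt (astar * (β - a₁) / (β ^ 2 - a₁ * a₂)))
        (nhdsWithin βstar (Set.Iio βstar)) (nhds (Real.sqrt γ₂)) := by
  intro βstar γ₁ γ₂
  constructor
  · exact rho_aux a₁ a₂ astar h₁ h₁' h₂ h₂'
  · have := rho_aux a₂ a₁ astar h₂ h₂' h₁ h₁'
    rw [mul_comm (astar - a₂), add_comm (Real.sqrt (astar - a₂)), mul_comm a₂] at this
    exact this
end
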